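/- Let U ⊆ ℂ be open, let P, χ : U → ℂ be holomorphic, and let u : U → ℝ be a smooth function satisfying Δu = 4·(e^{2u} − e^{−2u}·|P|²) on U. Define Ṗ = χ·P' + 2·χ'·P (where P', χ' are the complex derivatives), define u_z = (1/2)·(∂u/∂x − i·∂u/∂y), and define the complex-valued function F = χ' + 2·χ·u_z on U. Then F satisfies ΔF − 8·(e^{2u} + e^{−2u}·|P|²)·F + 8·e^{−2u}·conj(P)·Ṗ = 0 at every point of U, where Δ is applied to the real and imaginary parts of F separately. -/

import Mathlib

/-- Directional derivative of `f : ℂ → E` at `z` in the direction `v ∈ ℂ`. -/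
noncomputable def dirDeriv {E : Type*} [NormedAddCommGroup E] [NormedSpace ℝ E]
    (v : ℂ) (f : ℂ → E) (z : ℂ) : E :=
  deriv (fun t : ℝ => f (z + t • v)) 0

/-- The flat Laplacian `Δf = ∂²f/∂x² + ∂²f/∂y²` of a function on `ℂ ≅ ℝ²`
(applied componentwise when the target is `ℂ`). -/
noncomputable def flatLaplacian {E : Type*} [NormedAddCommGroup E] [NormedSpace ℝ E]
    (f : ℂ → E) (z : ℂ) : E :=
  dirDeriv 1 (dirDeriv 1 f) z + dirDeriv Complex.I (dirDeriv Complex.I f) z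

/-- The Wirtinger derivative `u_z = ½(∂u/∂x − i ∂u/∂y)` of a real-valued
function on `ℂ`. -/
noncomputable def wirtingerDeriv (u : ℂ → ℝ) (z : ℂ) : ℂ :=
  (((dirDeriv 1 u z : ℝ) : ℂ) - Complex.I * ((dirDeriv Complex.I u z : ℝ) : ℂ)) / 2

/-- `Ṗ = χ P' + 2 χ' P`, the coefficient of the Lie derivative `L_X (P dz²)`
along `X = χ ∂/∂z`. -/
noncomputable def lieDerivCoeff (P χ : ℂ → ℂ) (z : ℂ) : ℂ :=
  χ z * deriv P z + 2 * deriv χ z * P z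

/-- `F_X = χ' + 2 χ u_z`, the complex variation associated to the holomorphic
vector field `X = χ ∂/∂z`. -/
noncomputable def holoVariation (χ : ℂ → ℂ) (u : ℂ → ℝ) (z : ℂ) : ℂ :=
  deriv χ z + 2 * χ z * wirtingerDeriv u z

open Complex Filter Topology
open scoped ContDiff

section Basic
variable {E : Type*} [NormedAddCommGroup E] [NormedSpace ℝ E]

lemma dirDeriv_eq_fderiv {f : ℂ → E} {z : ℂ} (v : ℂ) (hf : DifferentiableAt ℝ f z) :
    dirDeriv v f z = fderiv ℝ f z v := by
  have hc : HasDerivAt (fun t : ℝ => z + t • v) v 0 := by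
    simpa using ((hasDerivAt_id (0:ℝ)).smul_const v).const_add z
  have hf' : HasFDerivAt f (fderiv ℝ f z) ((fun t : ℝ => z + t • v) 0) := by
    simpa using hf.hasFDerivAt
  exact (hf'.comp_hasDerivAt 0 hc).deriv

lemma dirDeriv_congr {f g : ℂ → E} {z : ℂ} (v : ℂ) (h : f =ᶠ[𝓝 z] g) :
    dirDeriv v f z = dirDeriv v g z := by
  unfold dirDeriv
  apply Filter.EventuallyEq.deriv_eq
  have ht : Tendsto (fun t : ℝ => z + t • v) (𝓝 0) (𝓝 z) := by
    have hcont : Continuous (fun t : ℝ => z + t • v) := by continuity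
    simpa using hcont.tendsto 0
  exact h.comp_tendsto ht

variable {U : Set ℂ}

lemma diffAt_of_contDiffOn (hU : IsOpen U) {f : ℂ → E} (hf : ContDiffOn ℝ ∞ f U) {z : ℂ} (hz : z ∈ U) :
    DifferentiableAt ℝ f z :=
  ((hf z hz).contDiffAt (hU.mem_nhds hz)).differentiableAt (by norm_num)

lemma contDiffOn_fderiv (hU : IsOpen U) {f : ℂ → E} (hf : ContDiffOn ℝ ∞ f U) :
    ContDiffOn ℝ ∞ (fderiv ℝ f) U :=
  ((contDiffOn_infty_iff_fderiv_of_isOpen hU).1 hf).2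

lemma contDiffOn_D (hU : IsOpen U) {f : ℂ → E} (hf : ContDiffOn ℝ ∞ f U) (v : ℂ) :
    ContDiffOn ℝ ∞ (fun y => fderiv ℝ f y v) U :=
  (contDiffOn_fderiv hU hf).clm_apply contDiffOn_const

lemma dirDeriv_eqOn (hU : IsOpen U) {f : ℂ → E} (hf : ContDiffOn ℝ ∞ f U) (v : ℂ) :
    ∀ z ∈ U, dirDeriv v f z = fderiv ℝ f z v := fun z hz =>
  dirDeriv_eq_fderiv v (diffAt_of_contDiffOn hU hf hz)

lemma dirDeriv_dirDeriv (hU : IsOpen U) {f : ℂ → E} (hf : ContDiffOn ℝ ∞ f U) (v w : ℂ) {z : ℂ} (hz : z ∈ U) :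
    dirDeriv w (dirDeriv v f) z = fderiv ℝ (fun y => fderiv ℝ f y v) z w := by
  have h1 : dirDeriv v f =ᶠ[𝓝 z] fun y => fderiv ℝ f y v := by
    filter_upwards [hU.mem_nhds hz] with y hy using dirDeriv_eqOn hU hf v y hy
  rw [dirDeriv_congr w h1]
  exact dirDeriv_eq_fderiv w (diffAt_of_contDiffOn hU (contDiffOn_D hU hf v) hz)

lemma flatLaplacian_eq (hU : IsOpen U) {f : ℂ → E} (hf : ContDiffOn ℝ ∞ f U) {z : ℂ} (hz : z ∈ U) :
    flatLaplacian f z = fderiv ℝ (fun y => fderiv ℝ f y 1) z 1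
      + fderiv ℝ (fun y => fderiv ℝ f y Complex.I) z Complex.I := by
  rw [flatLaplacian, dirDeriv_dirDeriv hU hf 1 1 hz, dirDeriv_dirDeriv hU hf Complex.I Complex.I hz]

lemma flatLaplacian_congr (hU : IsOpen U) {f g : ℂ → E} (h : ∀ y ∈ U, f y = g y) {z : ℂ} (hz : z ∈ U) :
    flatLaplacian f z = flatLaplacian g z := by
  have hfg : ∀ v, ∀ y ∈ U, dirDeriv v f y = dirDeriv v g y := by
    intro v y hy
    apply dirDeriv_congr
    filter_upwards [hU.mem_nhds hy] with t ht using h t ht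
  have h2 : ∀ v, dirDeriv v f =ᶠ[𝓝 z] dirDeriv v g := by
    intro v
    filter_upwards [hU.mem_nhds hz] with y hy using hfg v y hy
  rw [flatLaplacian, flatLaplacian, dirDeriv_congr 1 (h2 1), dirDeriv_congr Complex.I (h2 Complex.I)]

/-- Schwarz symmetry of second derivatives. -/
lemma D_symm (hU : IsOpen U) {f : ℂ → E} (hf : ContDiffOn ℝ ∞ f U) {z : ℂ} (hz : z ∈ U) (v w : ℂ) :
    fderiv ℝ (fun y => fderiv ℝ f y v) z w = fderiv ℝ (fun y => fderiv ℝ f y w) z v := by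
  have hdf : DifferentiableAt ℝ (fderiv ℝ f) z :=
    diffAt_of_contDiffOn hU (contDiffOn_fderiv hU hf) hz
  have key : ∀ a : ℂ, fderiv ℝ (fun y => fderiv ℝ f y a) z
      = ((ContinuousLinearMap.apply ℝ E a).comp (fderiv ℝ (fderiv ℝ f) z)) := by
    intro a
    exact ((ContinuousLinearMap.apply ℝ E a).hasFDerivAt.comp z hdf.hasFDerivAt).fderiv
  have hsymm : IsSymmSndFDerivAt ℝ f z :=
    ((hf z hz).contDiffAt (hU.mem_nhds hz)).isSymmSndFDerivAt (by simp; exact WithTop.coe_le_coe.2 le_top)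
  rw [key v, key w]
  simpa using hsymm w v

end Basic

section Rules
variable {z v : ℂ} {f g : ℂ → ℂ}

lemma D_add (hf : DifferentiableAt ℝ f z) (hg : DifferentiableAt ℝ g z) (v : ℂ) :
    fderiv ℝ (fun y => f y + g y) z v = fderiv ℝ f z v + fderiv ℝ g z v := by
  rw [fderiv_fun_add hf hg]; rfl

lemma D_sub (hf : DifferentiableAt ℝ f z) (hg : DifferentiableAt ℝ g z) (v : ℂ) :
    fderiv ℝ (fun y => f y - g y) z v = fderiv ℝ f z v - fderiv ℝ g z v := by
  rw [fderiv_fun_sub hf hg]; rfl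

lemma D_mul (hf : DifferentiableAt ℝ f z) (hg : DifferentiableAt ℝ g z) (v : ℂ) :
    fderiv ℝ (fun y => f y * g y) z v = f z * fderiv ℝ g z v + g z * fderiv ℝ f z v := by
  rw [fderiv_fun_mul hf hg]
  simp [smul_eq_mul]

lemma D_const_mul (hf : DifferentiableAt ℝ f z) (c v : ℂ) :
    fderiv ℝ (fun y => c * f y) z v = c * fderiv ℝ f z v := by
  rw [fderiv_const_mul hf]
  simp [smul_eq_mul]

lemma D_holo (hf : DifferentiableAt ℂ f z) (v : ℂ) :
    fderiv ℝ f z v = v * deriv f z := by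
  rw [hf.fderiv_restrictScalars ℝ]
  have : v = v • (1 : ℂ) := by simp
  rw [ContinuousLinearMap.coe_restrictScalars', this, map_smul]
  simp [fderiv_apply_one_eq_deriv, smul_eq_mul]

lemma D_conj (hf : DifferentiableAt ℝ f z) (v : ℂ) :
    fderiv ℝ (fun y => (starRingEnd ℂ) (f y)) z v = (starRingEnd ℂ) (fderiv ℝ f z v) := by
  have h := ((Complex.conjCLE.toContinuousLinearMap).hasFDerivAt.comp z hf.hasFDerivAt).fderiv
  have h2 : (fun y => (starRingEnd ℂ) (f y))
      = (fun y => Complex.conjCLE.toContinuousLinearMap (f y)) := by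
    funext y; simp
  rw [h2, show (fun y => Complex.conjCLE.toContinuousLinearMap (f y))
    = ⇑Complex.conjCLE.toContinuousLinearMap ∘ f from rfl, h]
  simp

lemma D_coe {g : ℂ → ℝ} (hg : DifferentiableAt ℝ g z) (v : ℂ) :
    fderiv ℝ (fun y => ((g y : ℝ) : ℂ)) z v = ((fderiv ℝ g z v : ℝ) : ℂ) := by
  have h := ((Complex.ofRealCLM).hasFDerivAt.comp z hg.hasFDerivAt).fderiv
  have h2 : (fun y => ((g y : ℝ) : ℂ)) = (fun y => Complex.ofRealCLM (g y)) := by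
    funext y; simp
  rw [h2, show (fun y => Complex.ofRealCLM (g y)) = ⇑Complex.ofRealCLM ∘ g from rfl, h]
  simp

lemma D_rexp {g : ℂ → ℝ} (hg : DifferentiableAt ℝ g z) (v : ℂ) :
    fderiv ℝ (fun y => Real.exp (g y)) z v = Real.exp (g z) * fderiv ℝ g z v := by
  rw [(hg.hasFDerivAt.exp).fderiv]
  simp [smul_eq_mul]

end Rules

section Smooth
variable {U : Set ℂ} {f : ℂ → ℂ}

lemma CD_holo (hU : IsOpen U) (hf : DifferentiableOn ℂ f U) : ContDiffOn ℝ ∞ f U :=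
  (hf.contDiffOn hU : ContDiffOn ℂ ∞ f U).restrict_scalars ℝ

lemma holo_deriv (hU : IsOpen U) (hf : DifferentiableOn ℂ f U) :
    DifferentiableOn ℂ (deriv f) U :=
  ((hf.analyticOnNhd hU).deriv).differentiableOn

lemma CD_conj (hf : ContDiffOn ℝ ∞ f U) :
    ContDiffOn ℝ ∞ (fun y => (starRingEnd ℂ) (f y)) U := by
  have := (Complex.conjCLE.toContinuousLinearMap).contDiff (n := ∞) |>.comp_contDiffOn hf
  exact this

lemma CD_coe {g : ℂ → ℝ} (hg : ContDiffOn ℝ ∞ g U) :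
    ContDiffOn ℝ ∞ (fun y => ((g y : ℝ) : ℂ)) U := by
  have := (Complex.ofRealCLM).contDiff (n := ∞) |>.comp_contDiffOn hg
  exact this

lemma CD_rexp {g : ℂ → ℝ} (hg : ContDiffOn ℝ ∞ g U) :
    ContDiffOn ℝ ∞ (fun y => Real.exp (g y)) U :=
  Real.contDiff_exp.comp_contDiffOn hg

end Smooth

noncomputable section MainDefs

/-- Coerced partial derivative of `u` in direction `v`. -/
def Au (u : ℂ → ℝ) (v : ℂ) : ℂ → ℂ := fun z => ((fderiv ℝ u z v : ℝ) : ℂ)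

/-- Wirtinger derivative of `u`, in fderiv form. -/
def Wf (u : ℂ → ℝ) : ℂ → ℂ := fun z => (2⁻¹ : ℂ) * (Au u 1 z - Complex.I * Au u Complex.I z)

def E2p (u : ℂ → ℝ) : ℂ → ℂ := fun z => ((Real.exp (2 * u z) : ℝ) : ℂ)
def E2m (u : ℂ → ℝ) : ℂ → ℂ := fun z => ((Real.exp (-(2 * u z)) : ℝ) : ℂ)
def Qf (P : ℂ → ℂ) : ℂ → ℂ := fun z => P z * (starRingEnd ℂ) (P z)
def Hf (P : ℂ → ℂ) (u : ℂ → ℝ) : ℂ → ℂ := fun z => 4 * (E2p u z - E2m u z * Qf P z)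
def Gf (χ : ℂ → ℂ) (u : ℂ → ℝ) : ℂ → ℂ := fun z => deriv χ z + 2 * χ z * Wf u z

end MainDefs

section MainLemmas

variable {U : Set ℂ} {P χ : ℂ → ℂ} {u : ℂ → ℝ}

lemma cd_Au (hU : IsOpen U) (hu : ContDiffOn ℝ ∞ u U) (v : ℂ) :
    ContDiffOn ℝ ∞ (Au u v) U := CD_coe (contDiffOn_D hU hu v)

lemma cd_Wf (hU : IsOpen U) (hu : ContDiffOn ℝ ∞ u U) :
    ContDiffOn ℝ ∞ (Wf u) U :=
  contDiffOn_const.mul ((cd_Au hU hu 1).sub (contDiffOn_const.mul (cd_Au hU hu Complex.I)))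

lemma cd_E2p (hu : ContDiffOn ℝ ∞ u U) : ContDiffOn ℝ ∞ (E2p u) U :=
  CD_coe (CD_rexp (contDiffOn_const.mul hu))

lemma cd_E2m (hu : ContDiffOn ℝ ∞ u U) : ContDiffOn ℝ ∞ (E2m u) U :=
  CD_coe (CD_rexp (contDiffOn_const.mul hu).neg)

lemma cd_Qf (hU : IsOpen U) (hP : DifferentiableOn ℂ P U) : ContDiffOn ℝ ∞ (Qf P) U :=
  (CD_holo hU hP).mul (CD_conj (CD_holo hU hP))

lemma cd_Hf (hU : IsOpen U) (hP : DifferentiableOn ℂ P U) (hu : ContDiffOn ℝ ∞ u U) :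
    ContDiffOn ℝ ∞ (Hf P u) U :=
  contDiffOn_const.mul ((cd_E2p hu).sub ((cd_E2m hu).mul (cd_Qf hU hP)))

lemma cd_derivχ (hU : IsOpen U) (hχ : DifferentiableOn ℂ χ U) :
    ContDiffOn ℝ ∞ (deriv χ) U := CD_holo hU (holo_deriv hU hχ)

lemma cd_Gf (hU : IsOpen U) (hχ : DifferentiableOn ℂ χ U) (hu : ContDiffOn ℝ ∞ u U) :
    ContDiffOn ℝ ∞ (Gf χ u) U :=
  (cd_derivχ hU hχ).add ((contDiffOn_const.mul (CD_holo hU hχ)).mul (cd_Wf hU hu))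

end MainLemmas

section DerivLemmas

open Complex

variable {U : Set ℂ} {P χ : ℂ → ℂ} {u : ℂ → ℝ}

/-- unfold the derivative of `Au`. -/
lemma dAu (hU : IsOpen U) (hu : ContDiffOn ℝ ∞ u U) (v w : ℂ) {z : ℂ} (hz : z ∈ U) :
    fderiv ℝ (Au u v) z w = ((fderiv ℝ (fun t => fderiv ℝ u t v) z w : ℝ) : ℂ) :=
  D_coe (diffAt_of_contDiffOn hU (contDiffOn_D hU hu v) hz) w

/-- Schwarz symmetry for `Au`. -/
lemma Au_swap (hU : IsOpen U) (hu : ContDiffOn ℝ ∞ u U) (v w a : ℂ) {z : ℂ} (hz : z ∈ U) :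
    fderiv ℝ (Au u v) z w = fderiv ℝ (Au u w) z v := by
  rw [dAu hU hu v w hz, dAu hU hu w v hz, D_symm hU hu hz v w]

lemma dWf (hU : IsOpen U) (hu : ContDiffOn ℝ ∞ u U) (v : ℂ) {z : ℂ} (hz : z ∈ U) :
    fderiv ℝ (Wf u) z v
      = 2⁻¹ * (fderiv ℝ (Au u 1) z v - Complex.I * fderiv ℝ (Au u Complex.I) z v) := by
  have h1 : DifferentiableAt ℝ (Au u 1) z := diffAt_of_contDiffOn hU (cd_Au hU hu 1) hz
  have hI : DifferentiableAt ℝ (Au u Complex.I) z :=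
    diffAt_of_contDiffOn hU (cd_Au hU hu Complex.I) hz
  unfold Wf
  rw [D_const_mul (h1.fun_sub (hI.const_mul _)), D_sub h1 (hI.const_mul _),
    D_const_mul hI]

/-- the "lap of u" in `Au` terms. -/
lemma lapAu_eq (hU : IsOpen U) (hu : ContDiffOn ℝ ∞ u U) {z : ℂ} (hz : z ∈ U) :
    fderiv ℝ (Au u 1) z 1 + fderiv ℝ (Au u Complex.I) z Complex.I
      = ((flatLaplacian u z : ℝ) : ℂ) := by
  rw [dAu hU hu 1 1 hz, dAu hU hu Complex.I Complex.I hz, flatLaplacian_eq hU hu hz]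
  push_cast
  ring

/-- key identity: `∂̄ W = Δu / 4` (here `D1 W + I DI W = Δu/2`). -/
lemma key1 (hU : IsOpen U) (hu : ContDiffOn ℝ ∞ u U) {z : ℂ} (hz : z ∈ U) :
    fderiv ℝ (Wf u) z 1 + Complex.I * fderiv ℝ (Wf u) z Complex.I
      = 2⁻¹ * ((flatLaplacian u z : ℝ) : ℂ) := by
  rw [dWf hU hu 1 hz, dWf hU hu Complex.I hz, ← lapAu_eq hU hu hz,
    Au_swap hU hu 1 Complex.I 0 hz]
  linear_combination (-(2⁻¹ : ℂ) * fderiv ℝ (Au u Complex.I) z Complex.I) * Complex.I_sq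

end DerivLemmas

noncomputable def LapAu (u : ℂ → ℝ) : ℂ → ℂ :=
  fun y => fderiv ℝ (Au u 1) y 1 + fderiv ℝ (Au u Complex.I) y Complex.I

section ThirdDeriv

variable {U : Set ℂ} {P χ : ℂ → ℂ} {u : ℂ → ℝ}

lemma ddWf_sum (hU : IsOpen U) (hu : ContDiffOn ℝ ∞ u U) {z : ℂ} (hz : z ∈ U) :
    fderiv ℝ (fun y => fderiv ℝ (Wf u) y 1) z 1
      + fderiv ℝ (fun y => fderiv ℝ (Wf u) y Complex.I) z Complex.I
      = 2⁻¹ * (fderiv ℝ (LapAu u) z 1 - Complex.I * fderiv ℝ (LapAu u) z Complex.I) := by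
  have hdiff : ∀ a v : ℂ, DifferentiableAt ℝ (fun y => fderiv ℝ (Au u a) y v) z :=
    fun a v => diffAt_of_contDiffOn hU (contDiffOn_D hU (cd_Au hU hu a) v) hz
  -- expansion of second derivatives of W
  have hvw : ∀ v w : ℂ, fderiv ℝ (fun y => fderiv ℝ (Wf u) y v) z w
      = 2⁻¹ * (fderiv ℝ (fun y => fderiv ℝ (Au u 1) y v) z w
        - Complex.I * fderiv ℝ (fun y => fderiv ℝ (Au u Complex.I) y v) z w) := by
    intro v w
    have hev : (fun y => fderiv ℝ (Wf u) y v)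
        =ᶠ[nhds z] (fun y => 2⁻¹ * (fderiv ℝ (Au u 1) y v
          - Complex.I * fderiv ℝ (Au u Complex.I) y v)) := by
      filter_upwards [hU.mem_nhds hz] with y hy using dWf hU hu v hy
    rw [hev.fderiv_eq]
    rw [D_const_mul ((hdiff 1 v).fun_sub ((hdiff Complex.I v).const_mul _)),
      D_sub (hdiff 1 v) ((hdiff Complex.I v).const_mul _), D_const_mul (hdiff Complex.I v)]
  -- swapping the first two indices
  have swap12 : ∀ a v w : ℂ, fderiv ℝ (fun y => fderiv ℝ (Au u a) y v) z w
      = fderiv ℝ (fun y => fderiv ℝ (Au u v) y a) z w := by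
    intro a v w
    have hev : (fun y => fderiv ℝ (Au u a) y v) =ᶠ[nhds z] (fun y => fderiv ℝ (Au u v) y a) := by
      filter_upwards [hU.mem_nhds hz] with y hy using Au_swap hU hu a v 0 hy
    rw [hev.fderiv_eq]
  -- symmetry in the last two indices
  have sym23 : ∀ a v w : ℂ, fderiv ℝ (fun y => fderiv ℝ (Au u a) y v) z w
      = fderiv ℝ (fun y => fderiv ℝ (Au u a) y w) z v :=
    fun a v w => D_symm hU (cd_Au hU hu a) hz v w
  have hsum : ∀ w : ℂ, fderiv ℝ (LapAu u) z w
      = fderiv ℝ (fun y => fderiv ℝ (Au u 1) y 1) z w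
        + fderiv ℝ (fun y => fderiv ℝ (Au u Complex.I) y Complex.I) z w := by
    intro w
    unfold LapAu
    exact D_add (hdiff 1 1) (hdiff Complex.I Complex.I) w
  have hA : fderiv ℝ (fun y => fderiv ℝ (Au u Complex.I) y 1) z 1
      = fderiv ℝ (fun y => fderiv ℝ (Au u 1) y 1) z Complex.I := by
    rw [swap12, sym23]
  have hB : fderiv ℝ (fun y => fderiv ℝ (Au u 1) y Complex.I) z Complex.I
      = fderiv ℝ (fun y => fderiv ℝ (Au u Complex.I) y Complex.I) z 1 := by
    rw [swap12, sym23]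
  rw [hvw 1 1, hvw Complex.I Complex.I, hsum 1, hsum Complex.I]
  linear_combination (-(2⁻¹ : ℂ) * Complex.I) * hA + (2⁻¹ : ℂ) * hB

lemma dLap_eq_dHf (hU : IsOpen U)
    (heq : ∀ y ∈ U, LapAu u y = Hf P u y) (v : ℂ) {z : ℂ} (hz : z ∈ U) :
    fderiv ℝ (LapAu u) z v = fderiv ℝ (Hf P u) z v := by
  have hev : LapAu u =ᶠ[nhds z] Hf P u := by
    filter_upwards [hU.mem_nhds hz] with y hy using heq y hy
  rw [hev.fderiv_eq]

end ThirdDeriv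

section RHSDeriv

variable {U : Set ℂ} {P χ : ℂ → ℂ} {u : ℂ → ℝ}

lemma dE2p (hU : IsOpen U) (hu : ContDiffOn ℝ ∞ u U) (v : ℂ) {z : ℂ} (hz : z ∈ U) :
    fderiv ℝ (E2p u) z v = 2 * Au u v z * E2p u z := by
  have hu' : DifferentiableAt ℝ u z := diffAt_of_contDiffOn hU hu hz
  have h2u : DifferentiableAt ℝ (fun t => 2 * u t) z := hu'.const_mul 2
  have hin : fderiv ℝ (fun t => 2 * u t) z v = 2 * fderiv ℝ u z v := by
    rw [fderiv_const_mul hu' 2]; simp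
  unfold E2p
  rw [D_coe (h2u.exp) v, D_rexp h2u v, hin]
  unfold Au
  push_cast
  ring

lemma dE2m (hU : IsOpen U) (hu : ContDiffOn ℝ ∞ u U) (v : ℂ) {z : ℂ} (hz : z ∈ U) :
    fderiv ℝ (E2m u) z v = -(2 * Au u v z) * E2m u z := by
  have hu' : DifferentiableAt ℝ u z := diffAt_of_contDiffOn hU hu hz
  have h2u : DifferentiableAt ℝ (fun t => -(2 * u t)) z := (hu'.const_mul 2).neg
  have hin : fderiv ℝ (fun t => -(2 * u t)) z v = -(2 * fderiv ℝ u z v) := by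
    rw [fderiv_fun_neg, fderiv_const_mul hu' 2]; simp
  unfold E2m
  rw [D_coe (h2u.exp) v, D_rexp h2u v, hin]
  unfold Au
  push_cast
  ring

lemma dQf (hU : IsOpen U) (hP : DifferentiableOn ℂ P U) (v : ℂ) {z : ℂ} (hz : z ∈ U) :
    fderiv ℝ (Qf P) z v
      = P z * ((starRingEnd ℂ) v * (starRingEnd ℂ) (deriv P z))
        + (starRingEnd ℂ) (P z) * (v * deriv P z) := by
  have hPz : DifferentiableAt ℂ P z := hP.differentiableAt (hU.mem_nhds hz)
  have hPr : DifferentiableAt ℝ P z := hPz.restrictScalars ℝ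
  have hconj : DifferentiableAt ℝ (fun y => (starRingEnd ℂ) (P y)) z :=
    (Complex.conjCLE.differentiable.differentiableAt).comp z hPr
  unfold Qf
  rw [D_mul hPr hconj v, D_conj hPr v, D_holo hPz v, map_mul]


lemma dHf_ex (hU : IsOpen U) (hP : DifferentiableOn ℂ P U) (hu : ContDiffOn ℝ ∞ u U)
    (v : ℂ) {z : ℂ} (hz : z ∈ U) :
    fderiv ℝ (Hf P u) z v
      = 4 * (2 * Au u v z * E2p u z
        - (E2m u z * (P z * ((starRingEnd ℂ) v * (starRingEnd ℂ) (deriv P z))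
            + (starRingEnd ℂ) (P z) * (v * deriv P z))
          + Qf P z * (-(2 * Au u v z) * E2m u z))) := by
  have hE2p : DifferentiableAt ℝ (E2p u) z := diffAt_of_contDiffOn hU (cd_E2p hu) hz
  have hE2m : DifferentiableAt ℝ (E2m u) z := diffAt_of_contDiffOn hU (cd_E2m hu) hz
  have hQ : DifferentiableAt ℝ (Qf P) z := diffAt_of_contDiffOn hU (cd_Qf hU hP) hz
  unfold Hf
  rw [D_const_mul (hE2p.fun_sub (hE2m.fun_mul hQ)), D_sub hE2p (hE2m.fun_mul hQ), D_mul hE2m hQ,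
    dE2p hU hu v hz, dE2m hU hu v hz, dQf hU hP v hz]

lemma dGf_ex (hU : IsOpen U) (hχ : DifferentiableOn ℂ χ U) (hu : ContDiffOn ℝ ∞ u U)
    (v : ℂ) {z : ℂ} (hz : z ∈ U) :
    fderiv ℝ (Gf χ u) z v
      = v * deriv (deriv χ) z
        + ((2 * χ z) * fderiv ℝ (Wf u) z v + Wf u z * (2 * (v * deriv χ z))) := by
  have hχz : DifferentiableAt ℂ χ z := hχ.differentiableAt (hU.mem_nhds hz)
  have hχr : DifferentiableAt ℝ χ z := hχz.restrictScalars ℝ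
  have hC1 : DifferentiableAt ℂ (deriv χ) z :=
    (holo_deriv hU hχ).differentiableAt (hU.mem_nhds hz)
  have hC1r : DifferentiableAt ℝ (deriv χ) z := hC1.restrictScalars ℝ
  have hW : DifferentiableAt ℝ (Wf u) z := diffAt_of_contDiffOn hU (cd_Wf hU hu) hz
  have h2χ : DifferentiableAt ℝ (fun y => 2 * χ y) z := hχr.const_mul 2
  unfold Gf
  rw [D_add hC1r (h2χ.fun_mul hW) v, D_holo hC1 v, D_mul h2χ hW v, D_const_mul hχr 2 v,
    D_holo hχz v]

lemma ddGf_ex (hU : IsOpen U) (hχ : DifferentiableOn ℂ χ U) (hu : ContDiffOn ℝ ∞ u U)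
    (v : ℂ) {z : ℂ} (hz : z ∈ U) :
    fderiv ℝ (fun y => fderiv ℝ (Gf χ u) y v) z v
      = v * (v * deriv (deriv (deriv χ)) z)
        + (((2 * χ z) * fderiv ℝ (fun y => fderiv ℝ (Wf u) y v) z v
            + fderiv ℝ (Wf u) z v * (2 * (v * deriv χ z)))
          + (Wf u z * (2 * (v * (v * deriv (deriv χ) z)))
            + (2 * (v * deriv χ z)) * fderiv ℝ (Wf u) z v)) := by
  have hχz : DifferentiableAt ℂ χ z := hχ.differentiableAt (hU.mem_nhds hz)
  have hχr : DifferentiableAt ℝ χ z := hχz.restrictScalars ℝ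
  have hC1holo : DifferentiableOn ℂ (deriv χ) U := holo_deriv hU hχ
  have hC1 : DifferentiableAt ℂ (deriv χ) z := hC1holo.differentiableAt (hU.mem_nhds hz)
  have hC1r : DifferentiableAt ℝ (deriv χ) z := hC1.restrictScalars ℝ
  have hC2 : DifferentiableAt ℂ (deriv (deriv χ)) z :=
    (holo_deriv hU hC1holo).differentiableAt (hU.mem_nhds hz)
  have hC2r : DifferentiableAt ℝ (deriv (deriv χ)) z := hC2.restrictScalars ℝ
  have hW : DifferentiableAt ℝ (Wf u) z := diffAt_of_contDiffOn hU (cd_Wf hU hu) hz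
  have hDW : DifferentiableAt ℝ (fun y => fderiv ℝ (Wf u) y v) z :=
    diffAt_of_contDiffOn hU (contDiffOn_D hU (cd_Wf hU hu) v) hz
  have h2χ : DifferentiableAt ℝ (fun y => 2 * χ y) z := hχr.const_mul 2
  have hg : DifferentiableAt ℝ (fun y => 2 * (v * deriv χ y)) z :=
    (hC1r.const_mul v).const_mul 2
  have hev : (fun y => fderiv ℝ (Gf χ u) y v)
      =ᶠ[nhds z] (fun y => v * deriv (deriv χ) y
        + ((2 * χ y) * fderiv ℝ (Wf u) y v + Wf u y * (2 * (v * deriv χ y)))) := by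
    filter_upwards [hU.mem_nhds hz] with y hy using dGf_ex hU hχ hu v hy
  rw [hev.fderiv_eq]
  rw [D_add (hC2r.const_mul v) ((h2χ.fun_mul hDW).fun_add (hW.fun_mul hg)) v,
    D_const_mul hC2r v v, D_holo hC2 v,
    D_add (h2χ.fun_mul hDW) (hW.fun_mul hg) v,
    D_mul h2χ hDW v, D_const_mul hχr 2 v, D_holo hχz v,
    D_mul hW hg v, D_const_mul (hC1r.const_mul v) 2 v, D_const_mul hC1r v v, D_holo hC1 v]


/-- Theorem 7.1: if `Δu = 4(e^{2u} − e^{−2u}|P|²)` on an open set `U`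
with `P`, `χ` holomorphic and `u` smooth, then `F = χ' + 2χu_z` satisfies the complex
variation equation `ΔF − 8(e^{2u} + e^{−2u}|P|²)F + 8e^{−2u} conj(P) Ṗ = 0` on `U`,
where `Ṗ = χP' + 2χ'P`. -/
theorem statement9 (U : Set ℂ) (hU : IsOpen U)
    (P χ : ℂ → ℂ) (hP : DifferentiableOn ℂ P U) (hχ : DifferentiableOn ℂ χ U)
    (u : ℂ → ℝ) (hu : ContDiffOn ℝ (⊤ : ℕ∞) u U)
    (hu_eq : ∀ z ∈ U, flatLaplacian u z
      = 4 * (Real.exp (2 * u z) - Real.exp (-(2 * u z)) * (‖P z‖) ^ 2)) :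
    ∀ z ∈ U,
      flatLaplacian (holoVariation χ u) z
        - 8 * ((Real.exp (2 * u z) : ℂ)
            + (Real.exp (-(2 * u z)) : ℂ) * ((‖P z‖ : ℂ)) ^ 2)
          * holoVariation χ u z
        + 8 * (Real.exp (-(2 * u z)) : ℂ) * (starRingEnd ℂ) (P z)
          * lieDerivCoeff P χ z = 0 := by
  intro z hz
  have cd_u : ContDiffOn ℝ ∞ u U := hu.of_le (by simp)
  have habs : ∀ w : ℂ, ((‖w‖ : ℝ) : ℂ) ^ 2 = w * (starRingEnd ℂ) w := by
    intro w
    rw [← Complex.ofReal_pow, Complex.sq_norm, Complex.mul_conj]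
  -- holoVariation agrees with Gf on U
  have hVar : ∀ y ∈ U, holoVariation χ u y = Gf χ u y := by
    intro y hy
    unfold holoVariation Gf wirtingerDeriv Wf Au
    rw [dirDeriv_eqOn hU cd_u 1 y hy, dirDeriv_eqOn hU cd_u Complex.I y hy]
    ring
  -- the PDE in coerced form
  have hflat : ∀ y ∈ U, ((flatLaplacian u y : ℝ) : ℂ)
      = 4 * (E2p u y - E2m u y * Qf P y) := by
    intro y hy
    rw [hu_eq y hy]
    unfold E2p E2m Qf
    push_cast
    rw [habs (P y)]
  have heq : ∀ y ∈ U, LapAu u y = Hf P u y := by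
    intro y hy
    have h0 : LapAu u y = ((flatLaplacian u y : ℝ) : ℂ) := lapAu_eq hU cd_u hy
    rw [h0, hflat y hy]
    rfl
  -- the Laplacian of the variation
  have hlap : flatLaplacian (holoVariation χ u) z = flatLaplacian (Gf χ u) z :=
    flatLaplacian_congr hU hVar hz
  have hlapG := flatLaplacian_eq hU (cd_Gf hU hχ cd_u) hz
  have h1 := ddGf_ex hU hχ cd_u 1 hz
  have hI := ddGf_ex hU hχ cd_u Complex.I hz
  -- third-derivative identity
  have hddW := ddWf_sum hU cd_u hz
  rw [dLap_eq_dHf hU heq 1 hz, dLap_eq_dHf hU heq Complex.I hz,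
    dHf_ex hU hP cd_u 1 hz, dHf_ex hU hP cd_u Complex.I hz] at hddW
  simp only [map_one, Complex.conj_I, one_mul, mul_one] at hddW
  -- first-order key identity
  have hkey := key1 hU cd_u hz
  rw [hflat z hz] at hkey
  -- put everything together
  rw [hlap, hlapG, h1, hI, hVar z hz]
  unfold Gf lieDerivCoeff E2p E2m Qf Wf at *
  rw [habs (P z)]
  linear_combination (2 * χ z) * hddW + (4 * deriv χ z) * hkey
    + (deriv (deriv (deriv χ)) z
      - 4 * χ z * ((Real.exp (-(2 * u z)) : ℝ) : ℂ) * P z * (starRingEnd ℂ) (deriv P z)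
      + 4 * χ z * ((Real.exp (-(2 * u z)) : ℝ) : ℂ) * (starRingEnd ℂ) (P z) * deriv P z
      + Au u 1 z * deriv (deriv χ) z
      - Complex.I * Au u Complex.I z * deriv (deriv χ) z) * Complex.I_sq
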